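/- Let a ≤ b be real numbers with b − a ≥ 1, and let f, g : ℝ → ℝ be twice continuously differentiable on [a, b]. Define the operator L(h)(s) = h''(s) − (3/2)·h(s) + (1/8)·(h(s + 1/2) + h(s − 1/2)). If L(f)(s) ≤ L(g)(s) for every s ∈ (a + 1/2, b − 1/2), and f(s) ≥ g(s) for every s ∈ [a, a + 1/2] ∪ [b − 1/2, b], then f(s) ≥ g(s) for every s ∈ [a, b]. -/

import Mathlib

/-!
Let `u = f - g` attain its minimum over `[a, b]` at `x`. If `u x < 0`, the boundary condition puts
`x` in the open middle interval, so `x ± 1/2` lie in `[a, b]` and `u'' x ≥ 0`; then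
`L u x ≥ -(3/2) u x + (1/4) u x > 0`, contradicting `L u = L f - L g ≤ 0`.
-/

open Set Topology

theorem IsLocalMin.deriv_deriv_nonneg {f : ℝ → ℝ} {x : ℝ} (hmin : IsLocalMin f x)
    (hc : ContinuousAt f x) : 0 ≤ deriv (deriv f) x := by
  by_contra! hneg
  have hmax := isLocalMax_of_deriv_deriv_neg hneg hmin.deriv_eq_zero hc
  have hconst : f =ᶠ[𝓝 x] fun _ ↦ f x :=
    (hmin.and hmax).mono fun y hy ↦ le_antisymm hy.2 hy.1
  have hderiv : deriv f =ᶠ[𝓝 x] fun _ ↦ 0 :=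
    hconst.eventuallyEq_nhds.mono fun y hy ↦ by rw [hy.deriv_eq, deriv_const]
  rw [hderiv.deriv_eq, deriv_const] at hneg
  exact hneg.false

theorem IsLocalMin.iteratedDerivWithin_two_nonneg {f : ℝ → ℝ} {s : Set ℝ} {x : ℝ}
    (hmin : IsLocalMin f x) (hs : UniqueDiffOn ℝ s) (hx : s ∈ 𝓝 x)
    (hf : ContDiffOn ℝ 2 f s) : 0 ≤ iteratedDerivWithin 2 f s x := by
  have hfx : ContDiffAt ℝ 2 f x := hf.contDiffAt hx
  rw [iteratedDerivWithin_eq_iteratedDeriv hs hfx (mem_of_mem_nhds hx),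
    iteratedDeriv_succ, iteratedDeriv_one]
  exact hmin.deriv_deriv_nonneg hfx.continuousAt

/-- The operator `L`, with the second derivative taken within `s`. -/
noncomputable def delayOp (s : Set ℝ) (h : ℝ → ℝ) (x : ℝ) : ℝ :=
  iteratedDerivWithin 2 h s x - (3/2) * h x + (1/8) * (h (x + 1/2) + h (x - 1/2))

theorem delayOp_sub {s : Set ℝ} {f g : ℝ → ℝ} {x : ℝ} (hs : UniqueDiffOn ℝ s) (hx : x ∈ s)
    (hf : ContDiffWithinAt ℝ 2 f s x) (hg : ContDiffWithinAt ℝ 2 g s x) :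
    delayOp s (f - g) x = delayOp s f x - delayOp s g x := by
  simp only [delayOp, iteratedDerivWithin_sub hx hs hf hg, Pi.sub_apply]
  ring

theorem delayOp_pos_of_isMinOn {s : Set ℝ} {u : ℝ → ℝ} {x : ℝ} (hs : UniqueDiffOn ℝ s)
    (hx : s ∈ 𝓝 x) (hu : ContDiffOn ℝ 2 u s) (hmin : IsMinOn u s x)
    (hplus : x + 1/2 ∈ s) (hminus : x - 1/2 ∈ s) (hneg : u x < 0) :
    0 < delayOp s u x := by
  have h2 := (hmin.isLocalMin hx).iteratedDerivWithin_two_nonneg hs hx hu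
  have hp : u x ≤ u (x + 1/2) := hmin hplus
  have hm : u x ≤ u (x - 1/2) := hmin hminus
  unfold delayOp
  linarith

theorem delay_comparison_principle (a b : ℝ) (hab : a ≤ b)
    (f g : ℝ → ℝ)
    (hf : ContDiffOn ℝ 2 f (Set.Icc a b))
    (hg : ContDiffOn ℝ 2 g (Set.Icc a b))
    (hL : ∀ s ∈ Set.Ioo (a + 1/2) (b - 1/2),
      iteratedDerivWithin 2 f (Set.Icc a b) s - (3/2) * f s
          + (1/8) * (f (s + 1/2) + f (s - 1/2))
        ≤ iteratedDerivWithin 2 g (Set.Icc a b) s - (3/2) * g s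
          + (1/8) * (g (s + 1/2) + g (s - 1/2)))
    (hbd : ∀ s ∈ Set.Icc a (a + 1/2) ∪ Set.Icc (b - 1/2) b, g s ≤ f s) :
    ∀ s ∈ Set.Icc a b, g s ≤ f s := by
  have hu : ContDiffOn ℝ 2 (f - g) (Icc a b) := hf.sub hg
  obtain ⟨x, hx, hmin⟩ := isCompact_Icc.exists_isMinOn (nonempty_Icc.2 hab) hu.continuousOn
  suffices 0 ≤ (f - g) x from fun s hs ↦ sub_nonneg.1 (this.trans (hmin hs))
  by_contra! hneg
  have hx_mid : x ∈ Ioo (a + 1/2) (b - 1/2) := by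
    by_contra hx_bd
    refine hneg.not_ge (sub_nonneg.2 (hbd x ?_))
    rw [mem_Ioo, not_and_or, not_lt, not_lt] at hx_bd
    rcases hx_bd with h | h
    exacts [Or.inl ⟨hx.1, h⟩, Or.inr ⟨h, hx.2⟩]
  obtain ⟨hxa, hxb⟩ := hx_mid
  have hU : UniqueDiffOn ℝ (Icc a b) := uniqueDiffOn_Icc (by linarith)
  have hpos : 0 < delayOp (Icc a b) (f - g) x :=
    delayOp_pos_of_isMinOn hU (Icc_mem_nhds (by linarith) (by linarith)) hu hmin
      ⟨by linarith, by linarith⟩ ⟨by linarith, by linarith⟩ hneg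
  rw [delayOp_sub hU hx (hf x hx) (hg x hx)] at hpos
  exact (sub_pos.1 hpos).not_ge (hL x ⟨hxa, hxb⟩)
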